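/- arXiv:1609.05964 — 4 statements merged into one kernel-verified Lean document; each statement's English description precedes it below -/
import Mathlib

section
/- The point (1, 2/3, 2/3, 2/3, −2) belongs to the closure of 𝔹 ∩ 𝔹′, where 𝔹 is the relative interior (intrinsic interior, within the hyperplane β₁+β₂+β₃+β₄+β₅=1) of the convex hull in ℝ⁵ of the sixteen points B₁,…,B₁₆ listed below, and 𝔹′ is the relative interior of the convex hull of the points B′₁,…,B′₁₆, where B′ⱼ = (b₁,b₃,b₄,b₂,b₅) whenever Bⱼ = (b₁,b₂,b₃,b₄,b₅). -/
/-- The sixteen extremal points `B₁, …, B₁₆`. -/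
def Bpts : Set (Fin 5 → ℝ) :=
  {![1, 1, 1/2, 1/2, -2], ![1, 1/2, 1/2, 1, -2], ![1, 1/2, 1, 1/2, -2],
   ![-2, 1, 1/2, 1/2, 1], ![-2, 1/2, 1, 1/2, 1], ![-2, 1/2, 1/2, 1, 1],
   ![0, -3/2, 1/2, 1, 1], ![1, -3/2, 1/2, 1, 0], ![0, -3/2, 1, 1/2, 1],
   ![1, -3/2, 1, 1/2, 0], ![0, 1/2, -1/2, 1, 0], ![1/2, 0, -1/2, 1, 0],
   ![0, 0, -1/2, 1, 1/2], ![0, 1/2, 1, -1/2, 0], ![1/2, 0, 1, -1/2, 0],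
   ![0, 0, 1, -1/2, 1/2]}

/-- `𝔹`: the relative (intrinsic) interior of the convex hull of `B₁, …, B₁₆`. -/
noncomputable def BSet : Set (Fin 5 → ℝ) :=
  intrinsicInterior ℝ (convexHull ℝ Bpts)

/-- `𝔹′`: the relative (intrinsic) interior of the convex hull of `B′₁, …, B′₁₆`, where
`B′ⱼ = (b₁, b₃, b₄, b₂, b₅)` whenever `Bⱼ = (b₁, b₂, b₃, b₄, b₅)`. -/
noncomputable def BSet' : Set (Fin 5 → ℝ) :=
  intrinsicInterior ℝ
    (convexHull ℝ ((fun v : Fin 5 → ℝ => ![v 0, v 2, v 3, v 1, v 4]) '' Bpts))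

/-!
The five points `B₁, B₂, B₃, B₄, (B₁₂ + B₁₄)/2` are affinely independent, lie in both convex
hulls, and span the hyperplane `∑ βᵢ = 1` that contains both hulls. Hence the centroid `c` of
this simplex lies in both relative interiors `𝔹` and `𝔹′`. The point `x = (B₁ + B₂ + B₃)/3` lies
in both hulls, so by the line-segment principle for relative interiors the open segment from `c`
to `x` lies in `𝔹 ∩ 𝔹′`, and `x` is in its closure.
-/

open Set

section IntrinsicInterior

variable {V : Type*} [NormedAddCommGroup V] [NormedSpace ℝ V] {s t : Set V} {c x y : V}

theorem exists_affineIsometry_intrinsicInterior_eq_image_interior (s : Set V)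
    [Nonempty (affineSpan ℝ s)] :
    ∃ ψ : (affineSpan ℝ s).direction →ᵃⁱ[ℝ] V, range ψ = affineSpan ℝ s ∧
      intrinsicInterior ℝ s = ψ '' interior (ψ ⁻¹' s) := by
  obtain ⟨p⟩ := ‹Nonempty (affineSpan ℝ s)›
  let e := AffineIsometryEquiv.vaddConst ℝ p
  refine ⟨(affineSpan ℝ s).subtypeₐᵢ.comp e.toAffineIsometry, by ext; simp, ?_⟩
  change _ = (Subtype.val ∘ e.toHomeomorph) '' interior ((Subtype.val ∘ e.toHomeomorph) ⁻¹' s)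
  rw [intrinsicInterior, preimage_comp, ← e.toHomeomorph.preimage_interior, image_comp,
    e.toHomeomorph.image_preimage]

theorem Convex.openSegment_intrinsicInterior_subset_intrinsicInterior (hs : Convex ℝ s)
    (hx : x ∈ intrinsicInterior ℝ s) (hy : y ∈ s) :
    openSegment ℝ x y ⊆ intrinsicInterior ℝ s := by
  have : Nonempty (affineSpan ℝ s) := ⟨⟨y, subset_affineSpan ℝ s hy⟩⟩
  obtain ⟨ψ, hψ, hint⟩ := exists_affineIsometry_intrinsicInterior_eq_image_interior s
  rw [hint] at hx ⊢
  obtain ⟨x₀, hx₀, rfl⟩ := hx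
  obtain ⟨y₀, rfl⟩ : y ∈ range ψ := hψ ▸ subset_affineSpan ℝ s hy
  have hseg := (hs.affine_preimage ψ.toAffineMap).openSegment_interior_closure_subset_interior hx₀
    (subset_closure hy)
  calc openSegment ℝ (ψ x₀) (ψ y₀) = ψ '' openSegment ℝ x₀ y₀ :=
        (image_openSegment ℝ ψ.toAffineMap x₀ y₀).symm
    _ ⊆ ψ '' interior (ψ ⁻¹' s) := image_mono hseg

theorem AffineIndependent.centroid_mem_intrinsicInterior {ι : Type*} [Fintype ι] [Nonempty ι]
    {q : ι → V} (hq : AffineIndependent ℝ q) (hs : Convex ℝ s) (hqs : range q ⊆ s)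
    (hsq : s ⊆ affineSpan ℝ (range q)) :
    Finset.univ.centroid ℝ q ∈ intrinsicInterior ℝ s := by
  have : Nonempty (affineSpan ℝ s) :=
    ⟨⟨q (Classical.arbitrary ι), subset_affineSpan ℝ s (hqs (mem_range_self _))⟩⟩
  obtain ⟨ψ, hψ, hint⟩ := exists_affineIsometry_intrinsicInterior_eq_image_interior s
  have hspan : affineSpan ℝ (range q) = affineSpan ℝ s :=
    le_antisymm (affineSpan_mono ℝ hqs) (affineSpan_le.2 hsq)
  choose q₀ hq₀ using fun i => (hψ ▸ subset_affineSpan ℝ s (hqs (mem_range_self i)) : q i ∈ range ψ)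
  have hcomp : ψ.toAffineMap ∘ q₀ = q := funext hq₀
  have htop : affineSpan ℝ (range q₀) = ⊤ := by
    rw [← AffineSubspace.comap_map_eq_of_injective ψ.injective (affineSpan ℝ (range q₀)),
      AffineSubspace.map_span, ← range_comp, hcomp, hspan, eq_top_iff]
    rintro v -
    rw [AffineSubspace.mem_comap, ← SetLike.mem_coe, ← hψ]
    exact mem_range_self v
  let b : AffineBasis ι ℝ (affineSpan ℝ s).direction :=
    ⟨q₀, .of_comp ψ.toAffineMap (by rwa [hcomp]), htop⟩
  have hb : range b ⊆ ψ ⁻¹' s := by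
    rintro _ ⟨i, rfl⟩
    show ψ (q₀ i) ∈ s
    rw [hq₀]
    exact hqs (mem_range_self i)
  rw [hint, ← hcomp, Finset.centroid_def, ← Finset.map_affineCombination _ _ _
    (Finset.sum_centroidWeights_eq_one_of_nonempty ℝ _ Finset.univ_nonempty)]
  exact mem_image_of_mem _ (interior_mono (convexHull_min hb (hs.affine_preimage ψ.toAffineMap))
    b.centroid_mem_interior_convexHull)

theorem mem_closure_intrinsicInterior_inter (hs : Convex ℝ s) (ht : Convex ℝ t)
    (hcs : c ∈ intrinsicInterior ℝ s) (hct : c ∈ intrinsicInterior ℝ t) (hxs : x ∈ s)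
    (hxt : x ∈ t) : x ∈ closure (intrinsicInterior ℝ s ∩ intrinsicInterior ℝ t) := by
  have hseg : openSegment ℝ c x ⊆ intrinsicInterior ℝ s ∩ intrinsicInterior ℝ t :=
    subset_inter (hs.openSegment_intrinsicInterior_subset_intrinsicInterior hcs hxs)
      (ht.openSegment_intrinsicInterior_subset_intrinsicInterior hct hxt)
  exact closure_mono hseg (closure_openSegment (𝕜 := ℝ) c x ▸ right_mem_segment ℝ c x)

end IntrinsicInterior

/-- `B₁, B₂, B₃, B₄`, which are also `B′₃, B′₁, B′₂, B′₅`, and the midpoint of `B₁₂, B₁₄`,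
which is also the midpoint of `B′₁₂, B′₁₄`. -/
noncomputable def commonSimplex : Fin 5 → Fin 5 → ℝ :=
  ![![1, 1, 1/2, 1/2, -2], ![1, 1/2, 1/2, 1, -2], ![1, 1/2, 1, 1/2, -2], ![-2, 1, 1/2, 1/2, 1],
    ![1/4, 1/4, 1/4, 1/4, 0]]

theorem affineIndependent_commonSimplex : AffineIndependent ℝ commonSimplex := by
  rw [affineIndependent_iff_of_fintype]
  intro w hw hcomb i
  rw [Finset.univ.weightedVSub_eq_linear_combination hw] at hcomb
  have h0 := congrFun hcomb 0
  have h1 := congrFun hcomb 1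
  have h2 := congrFun hcomb 2
  have h4 := congrFun hcomb 4
  simp [Fin.sum_univ_five, commonSimplex] at hw h0 h1 h2 h4
  fin_cases i <;> dsimp <;> linarith

theorem hyperplane_subset_affineSpan_commonSimplex :
    {y : Fin 5 → ℝ | ∑ i, y i = 1} ⊆ affineSpan ℝ (range commonSimplex) := by
  intro y hy
  rw [mem_ofPred_eq, Fin.sum_univ_five] at hy
  set t := y 1 + y 2 + y 3
  let w : Fin 5 → ℝ := ![y 0 / 3 + 2 * y 1 - 3 * t / 5 - 2 / 15, 2 * y 3 - (1 + 2 * t) / 5,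
    2 * y 2 - (1 + 2 * t) / 5, t / 5 - y 0 / 3 - 1 / 15, 8 / 5 - 4 * t / 5]
  have hw : ∑ i, w i = 1 := by
    simp [w, Fin.sum_univ_five]
    ring
  suffices y = Finset.univ.affineCombination ℝ commonSimplex w from
    this ▸ affineCombination_mem_affineSpan hw commonSimplex
  rw [Finset.univ.affineCombination_eq_linear_combination _ _ hw]
  ext k
  fin_cases k <;> simp [w, t, Fin.sum_univ_five, commonSimplex] <;> linarith

theorem Bpts_subset_hyperplane : Bpts ⊆ {y : Fin 5 → ℝ | ∑ i, y i = 1} := by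
  intro v hv
  simp only [Bpts, mem_insert_iff, mem_singleton_iff] at hv
  rcases hv with rfl|rfl|rfl|rfl|rfl|rfl|rfl|rfl|rfl|rfl|rfl|rfl|rfl|rfl|rfl|rfl <;>
    simp [Fin.sum_univ_five] <;> norm_num

theorem image_Bpts_subset_hyperplane :
    (fun v : Fin 5 → ℝ => ![v 0, v 2, v 3, v 1, v 4]) '' Bpts ⊆ {y | ∑ i, y i = 1} := by
  rintro _ ⟨v, hv, rfl⟩
  have h := Bpts_subset_hyperplane hv
  simp only [mem_ofPred_eq, Fin.sum_univ_five, Matrix.cons_val_zero, Matrix.cons_val_one,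
    Matrix.cons_val] at h ⊢
  linarith

theorem range_commonSimplex_subset_convexHull_Bpts : range commonSimplex ⊆ convexHull ℝ Bpts := by
  rintro _ ⟨i, rfl⟩
  fin_cases i
  iterate 4 exact subset_convexHull ℝ _ (by simp [commonSimplex, Bpts])
  have h : commonSimplex 4 = midpoint ℝ ![1/2, 0, -1/2, 1, 0] ![0, 1/2, 1, -1/2, 0] := by
    ext k; fin_cases k <;> simp [commonSimplex, midpoint_eq_smul_add] <;> norm_num
  exact h ▸ segment_subset_convexHull (by simp [Bpts]) (by simp [Bpts])
    (midpoint_mem_segment _ _)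

theorem range_commonSimplex_subset_convexHull_image_Bpts :
    range commonSimplex ⊆
      convexHull ℝ ((fun v : Fin 5 → ℝ => ![v 0, v 2, v 3, v 1, v 4]) '' Bpts) := by
  rintro _ ⟨i, rfl⟩
  fin_cases i
  iterate 4 exact subset_convexHull ℝ _ (by simp [commonSimplex, Bpts, image_insert_eq])
  have h : commonSimplex 4 = midpoint ℝ ![1/2, -1/2, 1, 0, 0] ![0, 1, -1/2, 1/2, 0] := by
    ext k; fin_cases k <;> simp [commonSimplex, midpoint_eq_smul_add] <;> norm_num
  exact h ▸ segment_subset_convexHull (by simp [Bpts, image_insert_eq])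
    (by simp [Bpts, image_insert_eq]) (midpoint_mem_segment _ _)

theorem mem_convexHull_commonSimplex :
    ![(1 : ℝ), 2/3, 2/3, 2/3, -2] ∈ convexHull ℝ (range commonSimplex) := by
  have h : ![(1 : ℝ), 2/3, 2/3, 2/3, -2] =
      ∑ i, ![(1/3 : ℝ), 1/3, 1/3, 0, 0] i • commonSimplex i := by
    ext k; fin_cases k <;> simp [Fin.sum_univ_five, commonSimplex] <;> norm_num
  rw [h]
  refine (convex_convexHull ℝ _).sum_mem (fun i _ => ?_) ?_
    fun i _ => subset_convexHull ℝ _ (mem_range_self i)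
  · fin_cases i <;> norm_num
  · simp [Fin.sum_univ_five]; norm_num

/-- The point `(1, 2/3, 2/3, 2/3, −2)` belongs to the closure of `𝔹 ∩ 𝔹′`. -/
theorem point_mem_closure_B_inter_B' :
    ![(1 : ℝ), 2/3, 2/3, 2/3, -2] ∈ closure (BSet ∩ BSet') := by
  have hA := convex_convexHull ℝ Bpts
  have hA' := convex_convexHull ℝ ((fun v : Fin 5 → ℝ => ![v 0, v 2, v 3, v 1, v 4]) '' Bpts)
  have hq := range_commonSimplex_subset_convexHull_Bpts
  have hq' := range_commonSimplex_subset_convexHull_image_Bpts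
  have hspan := (AffineSubspace.convex _).convexHull_subset_iff.2
    (Bpts_subset_hyperplane.trans hyperplane_subset_affineSpan_commonSimplex)
  have hspan' := (AffineSubspace.convex _).convexHull_subset_iff.2
    (image_Bpts_subset_hyperplane.trans hyperplane_subset_affineSpan_commonSimplex)
  exact mem_closure_intrinsicInterior_inter hA hA'
    (affineIndependent_commonSimplex.centroid_mem_intrinsicInterior hA hq hspan)
    (affineIndependent_commonSimplex.centroid_mem_intrinsicInterior hA' hq' hspan')
    (hA.convexHull_subset_iff.2 hq mem_convexHull_commonSimplex)
    (hA'.convexHull_subset_iff.2 hq' mem_convexHull_commonSimplex)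
end

section
/- For all Schwartz functions f₁,f₂,f₃ on ℝ and every x ∈ ℝ, ∫_{{ξ₁<ξ₂<−ξ₃/2}} f̂₁(ξ₁)f̂₂(ξ₂)f̂₃(ξ₃) e^{2πix(ξ₁+ξ₂+ξ₃)} dξ = ∫_{{ξ₁<ξ₂}} f̂₁(ξ₁)f̂₂(ξ₂)f̂₃(ξ₃) e^{2πix(ξ₁+ξ₂+ξ₃)} dξ − ∫_{{ξ₁<ξ₂} ∩ {ξ₁+ξ₂+ξ₃>0}} f̂₁(ξ₁)f̂₂(ξ₂)f̂₃(ξ₃) e^{2πix(ξ₁+ξ₂+ξ₃)} dξ − ∫_{{ξ₁+ξ₂+ξ₃≤0} ∩ {−ξ₃≤2ξ₂}} f̂₁(ξ₁)f̂₂(ξ₂)f̂₃(ξ₃) e^{2πix(ξ₁+ξ₂+ξ₃)} dξ, all integrals taken over the indicated regions of ℝ³ with respect to Lebesgue measure. -/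
/-!
The half-space `{ξ₁ < ξ₂}` is the disjoint union of `{ξ₁ < ξ₂ < -ξ₃/2}`, of `{ξ₁ < ξ₂} ∩ {Σξ > 0}`
and of `{ξ₁ < ξ₂} ∩ {Σξ ≤ 0} ∩ {-ξ₃ ≤ 2ξ₂}`. On `{Σξ ≤ 0} ∩ {-ξ₃ ≤ 2ξ₂}` one has
`ξ₁ ≤ -ξ₂ - ξ₃ ≤ ξ₂`, so dropping the condition `ξ₁ < ξ₂` from the last piece only adds part of the
null hyperplane `ξ₁ = ξ₂`. The integrand is integrable, being a product of the integrable
functions `f̂ⱼ` with a unimodular phase.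
-/

open MeasureTheory Set

lemma volume_setOf_fst_eq_snd_fst : volume {p : ℝ × ℝ × ℝ | p.1 = p.2.1} = 0 := by
  let L : ℝ × ℝ × ℝ →ₗ[ℝ] ℝ :=
    LinearMap.fst ℝ ℝ (ℝ × ℝ) - LinearMap.fst ℝ ℝ ℝ ∘ₗ LinearMap.snd ℝ ℝ (ℝ × ℝ)
  have hL : LinearMap.ker L ≠ ⊤ := fun h => by
    have := LinearMap.mem_ker.1
      (h ▸ Submodule.mem_top : ((1 : ℝ), (0 : ℝ), (0 : ℝ)) ∈ LinearMap.ker L)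
    simp [L] at this
  have : (volume : Measure (ℝ × ℝ × ℝ)).IsAddHaarMeasure :=
    inferInstanceAs (volume.prod volume).IsAddHaarMeasure
  convert Measure.addHaar_submodule volume _ hL using 2
  ext p
  simp [L, sub_eq_zero]

lemma setOf_fst_lt_ae_eq_setOf_fst_le :
    {p : ℝ × ℝ × ℝ | p.1 < p.2.1} =ᵐ[volume] {p | p.1 ≤ p.2.1} := by
  refine ae_eq_set.2 ⟨by
    rw [sdiff_eq_empty.2 (ofPred_subset_ofPred.2 fun _ => le_of_lt), measure_empty], ?_⟩
  refine measure_mono_null (fun p ⟨hle, hnlt⟩ => ?_) volume_setOf_fst_eq_snd_fst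
  exact le_antisymm hle (not_lt.1 hnlt)

lemma setIntegral_eq_sub_sub_of_eq_union {α E : Type*} [MeasurableSpace α] [NormedAddCommGroup E]
    [NormedSpace ℝ E] {μ : Measure α} {f : α → E} {s t u v : Set α} (hf : IntegrableOn f v μ)
    (hv : v = s ∪ t ∪ u) (hst : Disjoint s t) (hsu : Disjoint s u) (htu : Disjoint t u)
    (ht : MeasurableSet t) (hu : MeasurableSet u) :
    ∫ x in s, f x ∂μ = ∫ x in v, f x ∂μ - ∫ x in t, f x ∂μ - ∫ x in u, f x ∂μ := by
  subst hv
  rw [setIntegral_union (disjoint_union_left.2 ⟨hsu, htu⟩) hu (hf.mono_set subset_union_left)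
      (hf.mono_set subset_union_right),
    setIntegral_union hst ht (hf.mono_set (by grind)) (hf.mono_set (by grind))]
  abel

lemma integrable_mul_mul_mul_exp {g₁ g₂ g₃ : ℝ → ℂ} (h₁ : Integrable g₁) (h₂ : Integrable g₂)
    (h₃ : Integrable g₃) (x : ℝ) :
    Integrable fun ξ : ℝ × ℝ × ℝ => g₁ ξ.1 * g₂ ξ.2.1 * g₃ ξ.2.2 *
      Complex.exp (2 * Real.pi * Complex.I * x * (ξ.1 + ξ.2.1 + ξ.2.2)) := by
  have hprod : Integrable fun ξ : ℝ × ℝ × ℝ => g₁ ξ.1 * (g₂ ξ.2.1 * g₃ ξ.2.2) :=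
    h₁.mul_prod (h₂.mul_prod h₃)
  simp only [← mul_assoc] at hprod
  refine hprod.mul_bdd (c := 1) (by fun_prop) (.of_forall fun ξ => le_of_eq ?_)
  rw [← Complex.norm_exp_ofReal_mul_I (2 * Real.pi * x * (ξ.1 + ξ.2.1 + ξ.2.2))]
  push_cast
  ring_nf

lemma setIntegral_fst_lt_lt_neg_half_eq_sub_sub {F : ℝ × ℝ × ℝ → ℂ} (hF : Integrable F) :
    (∫ ξ in {p : ℝ × ℝ × ℝ | p.1 < p.2.1 ∧ p.2.1 < -p.2.2 / 2}, F ξ) =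
      (∫ ξ in {p : ℝ × ℝ × ℝ | p.1 < p.2.1}, F ξ) -
      (∫ ξ in {p : ℝ × ℝ × ℝ | p.1 < p.2.1} ∩ {p : ℝ × ℝ × ℝ | p.1 + p.2.1 + p.2.2 > 0}, F ξ) -
      (∫ ξ in {p : ℝ × ℝ × ℝ | p.1 + p.2.1 + p.2.2 ≤ 0} ∩
          {p : ℝ × ℝ × ℝ | -p.2.2 ≤ 2 * p.2.1}, F ξ) := by
  set B : Set (ℝ × ℝ × ℝ) := {p | p.1 < p.2.1}
  set Q : Set (ℝ × ℝ × ℝ) := {p | p.1 + p.2.1 + p.2.2 ≤ 0} ∩ {p | -p.2.2 ≤ 2 * p.2.1}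
  have hQ : Q =ᵐ[volume] (Q ∩ B : Set (ℝ × ℝ × ℝ)) := by
    have hQle : Q ⊆ {p | p.1 ≤ p.2.1} := fun _ ⟨_, _⟩ => by grind
    conv_lhs => rw [← inter_eq_left.2 hQle]
    exact ae_eq_set_inter (ae_eq_refl Q) setOf_fst_lt_ae_eq_setOf_fst_le.symm
  rw [setIntegral_congr_set hQ]
  refine setIntegral_eq_sub_sub_of_eq_union hF.integrableOn ?_ ?_ ?_ ?_ ?_ ?_
  · ext p
    simp only [B, Q, mem_union, mem_inter_iff, mem_ofPred_eq]
    grind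
  · exact disjoint_left.2 fun _ ⟨_, _⟩ ⟨_, _⟩ => by grind
  · exact disjoint_left.2 fun _ ⟨_, _⟩ ⟨⟨_, _⟩, _⟩ => by grind
  · exact disjoint_left.2 fun _ ⟨_, _⟩ ⟨⟨_, _⟩, _⟩ => by grind
  · exact (measurableSet_lt (by fun_prop) (by fun_prop)).inter
      (measurableSet_lt (by fun_prop) (by fun_prop))
  · exact ((measurableSet_le (by fun_prop) (by fun_prop)).inter
      (measurableSet_le (by fun_prop) (by fun_prop))).inter
      (measurableSet_lt (by fun_prop) (by fun_prop))

lemma integrable_fourier (f : SchwartzMap ℝ ℂ) :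
    Integrable (FourierTransform.fourier (⇑f : ℝ → ℂ)) :=
  (FourierTransform.fourier f).integrable

/-- Frequency-side decomposition `C^{1,1,−2} = C^{1,1}·f₃ − H⁺(C^{1,1}(f₁,f₂)·f₃)
− H⁻(f₁·C^{−2,1}(f₃,f₂))`, as an identity of absolutely convergent integrals over
regions of `ℝ³`. -/
theorem C112_decomposition (f₁ f₂ f₃ : SchwartzMap ℝ ℂ) (x : ℝ) :
    (∫ ξ in {p : ℝ × ℝ × ℝ | p.1 < p.2.1 ∧ p.2.1 < -p.2.2 / 2},
        FourierTransform.fourier (⇑f₁ : ℝ → ℂ) ξ.1 * FourierTransform.fourier (⇑f₂ : ℝ → ℂ) ξ.2.1 *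
          FourierTransform.fourier (⇑f₃ : ℝ → ℂ) ξ.2.2 *
          Complex.exp ((2 : ℂ) * (Real.pi : ℂ) * Complex.I * (x : ℂ) *
            ((ξ.1 : ℂ) + (ξ.2.1 : ℂ) + (ξ.2.2 : ℂ)))) =
      (∫ ξ in {p : ℝ × ℝ × ℝ | p.1 < p.2.1},
          FourierTransform.fourier (⇑f₁ : ℝ → ℂ) ξ.1 * FourierTransform.fourier (⇑f₂ : ℝ → ℂ) ξ.2.1 *
            FourierTransform.fourier (⇑f₃ : ℝ → ℂ) ξ.2.2 *
            Complex.exp ((2 : ℂ) * (Real.pi : ℂ) * Complex.I * (x : ℂ) *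
              ((ξ.1 : ℂ) + (ξ.2.1 : ℂ) + (ξ.2.2 : ℂ)))) -
        (∫ ξ in {p : ℝ × ℝ × ℝ | p.1 < p.2.1} ∩
            {p : ℝ × ℝ × ℝ | p.1 + p.2.1 + p.2.2 > 0},
          FourierTransform.fourier (⇑f₁ : ℝ → ℂ) ξ.1 * FourierTransform.fourier (⇑f₂ : ℝ → ℂ) ξ.2.1 *
            FourierTransform.fourier (⇑f₃ : ℝ → ℂ) ξ.2.2 *
            Complex.exp ((2 : ℂ) * (Real.pi : ℂ) * Complex.I * (x : ℂ) *
              ((ξ.1 : ℂ) + (ξ.2.1 : ℂ) + (ξ.2.2 : ℂ)))) -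
        (∫ ξ in {p : ℝ × ℝ × ℝ | p.1 + p.2.1 + p.2.2 ≤ 0} ∩
            {p : ℝ × ℝ × ℝ | -p.2.2 ≤ 2 * p.2.1},
          FourierTransform.fourier (⇑f₁ : ℝ → ℂ) ξ.1 * FourierTransform.fourier (⇑f₂ : ℝ → ℂ) ξ.2.1 *
            FourierTransform.fourier (⇑f₃ : ℝ → ℂ) ξ.2.2 *
            Complex.exp ((2 : ℂ) * (Real.pi : ℂ) * Complex.I * (x : ℂ) *
              ((ξ.1 : ℂ) + (ξ.2.1 : ℂ) + (ξ.2.2 : ℂ)))) :=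
  setIntegral_fst_lt_lt_neg_half_eq_sub_sub <| integrable_mul_mul_mul_exp
    (integrable_fourier f₁) (integrable_fourier f₂) (integrable_fourier f₃) x
end

section
/- For all Schwartz functions f₁,f₂,f₃,f₄ on ℝ and every x ∈ ℝ, ∫_{{ξ₁<ξ₂<ξ₃<−ξ₄/2}} ∏_{j=1}^{4} f̂ⱼ(ξⱼ) e^{2πix(ξ₁+ξ₂+ξ₃+ξ₄)} dξ = ∫_{{ξ₁<ξ₂<ξ₃}} ∏_{j=1}^{4} f̂ⱼ(ξⱼ) e^{2πix(ξ₁+ξ₂+ξ₃+ξ₄)} dξ − ∫_{{ξ₁<ξ₂<ξ₃} ∩ {ξ₂+ξ₃+ξ₄>0}} ∏_{j=1}^{4} f̂ⱼ(ξⱼ) e^{2πix(ξ₁+ξ₂+ξ₃+ξ₄)} dξ − ∫_{{ξ₁<ξ₂} ∩ {ξ₂<−(ξ₃+ξ₄)} ∩ {−ξ₄/2<ξ₃}} ∏_{j=1}^{4} f̂ⱼ(ξⱼ) e^{2πix(ξ₁+ξ₂+ξ₃+ξ₄)} dξ, all integrals taken over the indicated regions of ℝ⁴ with respect to Lebesgue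 measure. -/
open MeasureTheory FourierTransform

/-! The integrand is the tensor product of the integrable functions `f̂ⱼ(ξ) e^{2πixξ}`, hence
integrable on `ℝ⁴`. Off the Lebesgue-null hyperplanes `ξ₂ + ξ₃ + ξ₄ = 0` and `2ξ₃ + ξ₄ = 0`, the
chamber `ξ₁ < ξ₂ < ξ₃` splits, according to the signs of `2ξ₃ + ξ₄` and then of `ξ₂ + ξ₃ + ξ₄`,
into the three disjoint regions on the right, and the identity is additivity of the integral. -/

instance : (volume : Measure (ℝ × ℝ × ℝ × ℝ)).IsAddHaarMeasure := by
  have : (volume : Measure (ℝ × ℝ × ℝ)).IsAddHaarMeasure := by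
    rw [Measure.volume_eq_prod]
    exact Measure.prod.instIsAddHaarMeasure _ _
  rw [Measure.volume_eq_prod]
  exact Measure.prod.instIsAddHaarMeasure _ _

theorem MeasureTheory.Measure.addHaar_setOf_linearMap_eq_zero {E : Type*} [NormedAddCommGroup E]
    [NormedSpace ℝ E] [MeasurableSpace E] [BorelSpace E] [FiniteDimensional ℝ E]
    (μ : Measure E) [μ.IsAddHaarMeasure] {l : E →ₗ[ℝ] ℝ} (hl : l ≠ 0) :
    μ {p | l p = 0} = 0 :=
  Measure.addHaar_submodule μ (LinearMap.ker l) (by rwa [Ne, LinearMap.ker_eq_top])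

theorem MeasureTheory.Measure.addHaar_setOf_linear_eq_zero (μ : Measure (ℝ × ℝ × ℝ × ℝ))
    [μ.IsAddHaarMeasure] {a b c d : ℝ} (h : (a, b, c, d) ≠ 0) :
    μ {p : ℝ × ℝ × ℝ × ℝ | a * p.1 + b * p.2.1 + c * p.2.2.1 + d * p.2.2.2 = 0} = 0 := by
  let l : (ℝ × ℝ × ℝ × ℝ) →ₗ[ℝ] ℝ :=
    { toFun p := a * p.1 + b * p.2.1 + c * p.2.2.1 + d * p.2.2.2
      map_add' p q := by
        simp only [Prod.fst_add, Prod.snd_add]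
        ring
      map_smul' r p := by
        simp only [Prod.smul_fst, Prod.smul_snd, smul_eq_mul, RingHom.id_apply]
        ring }
  refine Measure.addHaar_setOf_linearMap_eq_zero (l := l) μ fun hl => h ?_
  have e (p : ℝ × ℝ × ℝ × ℝ) : a * p.1 + b * p.2.1 + c * p.2.2.1 + d * p.2.2.2 = 0 :=
    LinearMap.congr_fun hl p
  simp only [Prod.mk_eq_zero]
  exact ⟨by simpa using e (1, 0, 0, 0), by simpa using e (0, 1, 0, 0),
    by simpa using e (0, 0, 1, 0), by simpa using e (0, 0, 0, 1)⟩

theorem setIntegral_eq_sub_sub_of_ae_eq_union {X E : Type*} [MeasurableSpace X]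
    [NormedAddCommGroup E] [NormedSpace ℝ E] {μ : Measure X} {f : X → E} {s t u v : Set X}
    (hf : Integrable f μ) (hs : s =ᵐ[μ] (t ∪ u ∪ v : Set X)) (htu : Disjoint t u)
    (htuv : Disjoint (t ∪ u) v) (hu : MeasurableSet u) (hv : MeasurableSet v) :
    ∫ x in t, f x ∂μ = ∫ x in s, f x ∂μ - ∫ x in u, f x ∂μ - ∫ x in v, f x ∂μ := by
  rw [setIntegral_congr_set hs, setIntegral_union htuv hv hf.integrableOn hf.integrableOn,
    setIntegral_union htu hu hf.integrableOn hf.integrableOn]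
  abel

theorem MeasureTheory.Integrable.mul_cexp_two_pi_I {μ : Measure ℝ} {g : ℝ → ℂ}
    (hg : Integrable g μ) (x : ℝ) :
    Integrable (fun ξ => g ξ * Complex.exp (2 * Real.pi * Complex.I * x * ξ)) μ := by
  refine hg.mul_bdd (c := 1) (by fun_prop) (ae_of_all _ fun ξ => ?_)
  rw [show 2 * Real.pi * Complex.I * x * ξ = ((2 * Real.pi * x * ξ : ℝ) : ℂ) * Complex.I by
    push_cast; ring, Complex.norm_exp_ofReal_mul_I]

theorem MeasureTheory.Integrable.mul_prod₄ {α β γ δ R : Type*} [MeasureSpace α] [MeasureSpace β]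
    [MeasureSpace γ] [MeasureSpace δ] [NormedRing R] {g₁ : α → R} {g₂ : β → R} {g₃ : γ → R}
    {g₄ : δ → R} (h₁ : Integrable g₁) (h₂ : Integrable g₂) (h₃ : Integrable g₃)
    (h₄ : Integrable g₄) :
    Integrable fun p : α × β × γ × δ => g₁ p.1 * (g₂ p.2.1 * (g₃ p.2.2.1 * g₄ p.2.2.2)) :=
  h₁.mul_prod (h₂.mul_prod (h₃.mul_prod h₄))

theorem integrable_mul_cexp_two_pi_I_sum {g₁ g₂ g₃ g₄ : ℝ → ℂ} (h₁ : Integrable g₁)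
    (h₂ : Integrable g₂) (h₃ : Integrable g₃) (h₄ : Integrable g₄) (x : ℝ) :
    Integrable fun ξ : ℝ × ℝ × ℝ × ℝ => g₁ ξ.1 * g₂ ξ.2.1 * g₃ ξ.2.2.1 * g₄ ξ.2.2.2 *
      Complex.exp (2 * Real.pi * Complex.I * x * (ξ.1 + ξ.2.1 + ξ.2.2.1 + ξ.2.2.2)) := by
  refine ((h₁.mul_cexp_two_pi_I x).mul_prod₄ (h₂.mul_cexp_two_pi_I x) (h₃.mul_cexp_two_pi_I x)
    (h₄.mul_cexp_two_pi_I x)).congr (ae_of_all _ fun ξ => ?_)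
  simp only [mul_add, Complex.exp_add]
  ring

theorem lt_and_lt_iff_three_cases {a b c d : ℝ} (hs : b + c + d ≠ 0) (ht : 2 * c + d ≠ 0) :
    a < b ∧ b < c ↔ ((a < b ∧ b < c ∧ c < -d / 2) ∨ (a < b ∧ b < c) ∧ b + c + d > 0) ∨
      (a < b ∧ b < -(c + d)) ∧ -d / 2 < c := by
  constructor
  · rintro ⟨hab, hbc⟩
    rcases ht.lt_or_gt with ht | ht
    · exact .inl (.inl ⟨hab, hbc, by linarith⟩)
    rcases hs.lt_or_gt with hs | hs
    · exact .inr ⟨⟨hab, by linarith⟩, by linarith⟩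
    · exact .inl (.inr ⟨⟨hab, hbc⟩, hs⟩)
  · rintro ((h | ⟨h, -⟩) | ⟨⟨hab, hb⟩, hc⟩)
    · exact ⟨h.1, h.2.1⟩
    · exact h
    · exact ⟨hab, by linarith⟩

theorem setOf_lt_lt_ae_eq_union :
    {p : ℝ × ℝ × ℝ × ℝ | p.1 < p.2.1 ∧ p.2.1 < p.2.2.1} =ᵐ[volume]
      ({p : ℝ × ℝ × ℝ × ℝ | p.1 < p.2.1 ∧ p.2.1 < p.2.2.1 ∧ p.2.2.1 < -p.2.2.2 / 2} ∪
        {p : ℝ × ℝ × ℝ × ℝ | p.1 < p.2.1 ∧ p.2.1 < p.2.2.1} ∩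
          {p : ℝ × ℝ × ℝ × ℝ | p.2.1 + p.2.2.1 + p.2.2.2 > 0} ∪
        {p : ℝ × ℝ × ℝ × ℝ | p.1 < p.2.1} ∩ {p : ℝ × ℝ × ℝ × ℝ | p.2.1 < -(p.2.2.1 + p.2.2.2)} ∩
          {p : ℝ × ℝ × ℝ × ℝ | -p.2.2.2 / 2 < p.2.2.1} : Set (ℝ × ℝ × ℝ × ℝ)) := by
  have hs : ∀ᵐ p : ℝ × ℝ × ℝ × ℝ, p.2.1 + p.2.2.1 + p.2.2.2 ≠ 0 := ae_iff.2 <| by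
    simpa using Measure.addHaar_setOf_linear_eq_zero volume (a := 0) (b := 1) (c := 1) (d := 1)
      (by simp)
  have ht : ∀ᵐ p : ℝ × ℝ × ℝ × ℝ, 2 * p.2.2.1 + p.2.2.2 ≠ 0 := ae_iff.2 <| by
    simpa using Measure.addHaar_setOf_linear_eq_zero volume (a := 0) (b := 0) (c := 2) (d := 1)
      (by simp)
  filter_upwards [hs, ht] with p hs ht
  exact propext (lt_and_lt_iff_three_cases hs ht)

theorem disjoint_regions_lt_neg_half_pos :
    Disjoint {p : ℝ × ℝ × ℝ × ℝ | p.1 < p.2.1 ∧ p.2.1 < p.2.2.1 ∧ p.2.2.1 < -p.2.2.2 / 2}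
      ({p : ℝ × ℝ × ℝ × ℝ | p.1 < p.2.1 ∧ p.2.1 < p.2.2.1} ∩
        {p : ℝ × ℝ × ℝ × ℝ | p.2.1 + p.2.2.1 + p.2.2.2 > 0}) :=
  Set.disjoint_left.2 fun _ ⟨_, hbc, hc⟩ ⟨_, hs⟩ => by
    simp only [Set.mem_ofPred_eq] at hs
    linarith

theorem disjoint_regions_union_neg_sum :
    Disjoint ({p : ℝ × ℝ × ℝ × ℝ | p.1 < p.2.1 ∧ p.2.1 < p.2.2.1 ∧ p.2.2.1 < -p.2.2.2 / 2} ∪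
        {p : ℝ × ℝ × ℝ × ℝ | p.1 < p.2.1 ∧ p.2.1 < p.2.2.1} ∩
          {p : ℝ × ℝ × ℝ × ℝ | p.2.1 + p.2.2.1 + p.2.2.2 > 0})
      ({p : ℝ × ℝ × ℝ × ℝ | p.1 < p.2.1} ∩ {p : ℝ × ℝ × ℝ × ℝ | p.2.1 < -(p.2.2.1 + p.2.2.2)} ∩
        {p : ℝ × ℝ × ℝ × ℝ | -p.2.2.2 / 2 < p.2.2.1}) := by
  refine Set.disjoint_left.2 fun p hp ⟨⟨_, hb⟩, hc⟩ => ?_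
  simp only [Set.mem_union, Set.mem_inter_iff, Set.mem_ofPred_eq] at hp hb hc
  rcases hp with ⟨_, _, hc'⟩ | ⟨_, hs⟩ <;> linarith

/-- Frequency-side decomposition of `C^{1,1,1,−2}` into `C^{1,1,1}(f₁,f₂,f₃)·f₄` minus the
multiplier with symbol `1_{{ξ₁<ξ₂<ξ₃} ∩ {ξ₂+ξ₃+ξ₄>0}}` minus the frequency-side expression of
`C^{1,1,−1}(f₁,f₂,C^{−2,1}(f₄,f₃))`, as an identity of absolutely convergent integrals. -/
theorem C1112_decomposition (f₁ f₂ f₃ f₄ : SchwartzMap ℝ ℂ) (x : ℝ) :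
    (∫ ξ in {p : ℝ × ℝ × ℝ × ℝ |
        p.1 < p.2.1 ∧ p.2.1 < p.2.2.1 ∧ p.2.2.1 < -p.2.2.2 / 2},
        VectorFourier.fourierIntegral Real.fourierChar volume (innerₗ ℝ) (⇑f₁) ξ.1 * VectorFourier.fourierIntegral Real.fourierChar volume (innerₗ ℝ) (⇑f₂) ξ.2.1 *
          VectorFourier.fourierIntegral Real.fourierChar volume (innerₗ ℝ) (⇑f₃) ξ.2.2.1 * VectorFourier.fourierIntegral Real.fourierChar volume (innerₗ ℝ) (⇑f₄) ξ.2.2.2 *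
          Complex.exp ((2 : ℂ) * (Real.pi : ℂ) * Complex.I * (x : ℂ) *
            ((ξ.1 : ℂ) + (ξ.2.1 : ℂ) + (ξ.2.2.1 : ℂ) + (ξ.2.2.2 : ℂ)))) =
      (∫ ξ in {p : ℝ × ℝ × ℝ × ℝ | p.1 < p.2.1 ∧ p.2.1 < p.2.2.1},
          VectorFourier.fourierIntegral Real.fourierChar volume (innerₗ ℝ) (⇑f₁) ξ.1 * VectorFourier.fourierIntegral Real.fourierChar volume (innerₗ ℝ) (⇑f₂) ξ.2.1 *
            VectorFourier.fourierIntegral Real.fourierChar volume (innerₗ ℝ) (⇑f₃) ξ.2.2.1 * VectorFourier.fourierIntegral Real.fourierChar volume (innerₗ ℝ) (⇑f₄) ξ.2.2.2 *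
            Complex.exp ((2 : ℂ) * (Real.pi : ℂ) * Complex.I * (x : ℂ) *
              ((ξ.1 : ℂ) + (ξ.2.1 : ℂ) + (ξ.2.2.1 : ℂ) + (ξ.2.2.2 : ℂ)))) -
        (∫ ξ in {p : ℝ × ℝ × ℝ × ℝ | p.1 < p.2.1 ∧ p.2.1 < p.2.2.1} ∩
            {p : ℝ × ℝ × ℝ × ℝ | p.2.1 + p.2.2.1 + p.2.2.2 > 0},
          VectorFourier.fourierIntegral Real.fourierChar volume (innerₗ ℝ) (⇑f₁) ξ.1 * VectorFourier.fourierIntegral Real.fourierChar volume (innerₗ ℝ) (⇑f₂) ξ.2.1 *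
            VectorFourier.fourierIntegral Real.fourierChar volume (innerₗ ℝ) (⇑f₃) ξ.2.2.1 * VectorFourier.fourierIntegral Real.fourierChar volume (innerₗ ℝ) (⇑f₄) ξ.2.2.2 *
            Complex.exp ((2 : ℂ) * (Real.pi : ℂ) * Complex.I * (x : ℂ) *
              ((ξ.1 : ℂ) + (ξ.2.1 : ℂ) + (ξ.2.2.1 : ℂ) + (ξ.2.2.2 : ℂ)))) -
        (∫ ξ in {p : ℝ × ℝ × ℝ × ℝ | p.1 < p.2.1} ∩
            {p : ℝ × ℝ × ℝ × ℝ | p.2.1 < -(p.2.2.1 + p.2.2.2)} ∩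
            {p : ℝ × ℝ × ℝ × ℝ | -p.2.2.2 / 2 < p.2.2.1},
          VectorFourier.fourierIntegral Real.fourierChar volume (innerₗ ℝ) (⇑f₁) ξ.1 * VectorFourier.fourierIntegral Real.fourierChar volume (innerₗ ℝ) (⇑f₂) ξ.2.1 *
            VectorFourier.fourierIntegral Real.fourierChar volume (innerₗ ℝ) (⇑f₃) ξ.2.2.1 * VectorFourier.fourierIntegral Real.fourierChar volume (innerₗ ℝ) (⇑f₄) ξ.2.2.2 *
            Complex.exp ((2 : ℂ) * (Real.pi : ℂ) * Complex.I * (x : ℂ) *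
              ((ξ.1 : ℂ) + (ξ.2.1 : ℂ) + (ξ.2.2.1 : ℂ) + (ξ.2.2.2 : ℂ)))) := by
  exact setIntegral_eq_sub_sub_of_ae_eq_union
    (integrable_mul_cexp_two_pi_I_sum (𝓕 f₁).integrable (𝓕 f₂).integrable (𝓕 f₃).integrable
      (𝓕 f₄).integrable x)
    setOf_lt_lt_ae_eq_union disjoint_regions_lt_neg_half_pos disjoint_regions_union_neg_sum
    (by measurability) (by measurability)
end

section
/- For all Schwartz functions F, G, H on ℝ, ∫_ℝ ( ∫_{{(ξ₁,ξ₂)∈ℝ² : −ξ₁/2<ξ₂}} F̂(ξ₁) Ĝ(ξ₂) e^{2πix(ξ₁+ξ₂)} dξ₁dξ₂ ) · H(x) dx = ∫_ℝ ( ∫_{{(ξ₁,ξ₂)∈ℝ² : ξ₁<ξ₂}} Ĥ(ξ₁) Ĝ(ξ₂) e^{2πix(ξ₁+ξ₂)} dξ₁dξ₂ ) · F(x) dx. -/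
/-!
Integrating in `x` first (Fubini), the phase `e^{2πix(ξ₁+ξ₂)}` against the outer Schwartz
function produces its Fourier transform at `-(ξ₁+ξ₂)`. Both sides thus become integrals of a
product `F̂ Ĝ Ĥ` over a half-plane, and the measure-preserving involution
`(ξ₁, ξ₂) ↦ (-(ξ₁+ξ₂), ξ₂)` maps `{ξ₁ < ξ₂}` onto `{-ξ₁/2 < ξ₂}` while exchanging the
arguments of `F̂` and `Ĥ`.
-/

open MeasureTheory

open scoped FourierTransform Real

lemma Complex.norm_exp_two_pi_I_mul_mul (x t : ℝ) : ‖exp (2 * π * I * x * t)‖ = 1 := by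
  rw [norm_exp]
  simp

lemma Real.fourier_neg_eq_integral_exp_mul (W : ℝ → ℂ) (t : ℝ) :
    𝓕 W (-t) = ∫ x : ℝ, Complex.exp (2 * π * Complex.I * x * t) * W x := by
  rw [Real.fourier_real_eq_integral_exp_smul]
  congr 1 with x
  rw [smul_eq_mul]
  congr 2
  push_cast
  ring

lemma integral_integral_exp_mul_eq_integral_fourier {α : Type*} [MeasurableSpace α]
    {ν : Measure α} [SFinite ν] {φ : α → ℂ} (hφ : Integrable φ ν) {t : α → ℝ}
    (ht : Measurable t) {W : ℝ → ℂ} (hW : Integrable W) :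
    ∫ x : ℝ, (∫ ξ, φ ξ * Complex.exp (2 * π * Complex.I * x * t ξ) ∂ν) * W x =
      ∫ ξ, φ ξ * 𝓕 W (-t ξ) ∂ν := by
  have hint : Integrable (Function.uncurry fun (x : ℝ) ξ =>
      φ ξ * Complex.exp (2 * π * Complex.I * x * t ξ) * W x) (volume.prod ν) := by
    have hexp : Measurable fun q : ℝ × α => Complex.exp (2 * π * Complex.I * q.1 * t q.2) := by
      fun_prop
    have hmeas : AEStronglyMeasurable (fun q : ℝ × α =>
        φ q.2 * Complex.exp (2 * π * Complex.I * q.1 * t q.2) * W q.1) (volume.prod ν) :=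
      (hφ.aestronglyMeasurable.comp_snd.mul hexp.aestronglyMeasurable).mul
        hW.aestronglyMeasurable.comp_fst
    refine (hW.norm.mul_prod hφ.norm).mono' hmeas (ae_of_all _ fun q => le_of_eq ?_)
    simp only [Function.uncurry, norm_mul, Complex.norm_exp_two_pi_I_mul_mul, mul_one]
    exact mul_comm _ _
  calc _ = ∫ x : ℝ, ∫ ξ, φ ξ * Complex.exp (2 * π * Complex.I * x * t ξ) * W x ∂ν := by
          simp_rw [← integral_mul_const]
    _ = ∫ ξ, (∫ x : ℝ, φ ξ * Complex.exp (2 * π * Complex.I * x * t ξ) * W x) ∂ν :=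
          integral_integral_swap hint
    _ = _ := by simp_rw [Real.fourier_neg_eq_integral_exp_mul, ← integral_const_mul, mul_assoc]

lemma setIntegral_neg_fst_div_two_lt_snd {E : Type*} [NormedAddCommGroup E] [NormedSpace ℝ E]
    (g : ℝ × ℝ → E) :
    ∫ ξ in {p : ℝ × ℝ | -p.1 / 2 < p.2}, g ξ =
      ∫ ξ in {p : ℝ × ℝ | p.1 < p.2}, g (-(ξ.1 + ξ.2), ξ.2) := by
  set T : ℝ × ℝ → ℝ × ℝ := fun p => (-(p.1 + p.2), p.2)
  have hT : Function.Involutive T := fun p => by simp [T]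
  have hTvol : MeasurePreserving T := by
    rw [Measure.volume_eq_prod]
    exact ((Measure.measurePreserving_neg (volume : Measure ℝ)).prod
      (MeasurePreserving.id volume)).comp (measurePreserving_add_prod volume volume)
  have hpre : T ⁻¹' {p | -p.1 / 2 < p.2} = {p | p.1 < p.2} := by
    ext p
    simp only [T, Set.mem_preimage, Set.mem_ofPred_eq]
    constructor <;> intro <;> linarith
  rw [← hpre, hTvol.setIntegral_preimage_emb
    (MeasurableEquiv.ofInvolutive T hT (by fun_prop)).measurableEmbedding]

/-- Duality identity `∫ C^{−2,1}(F,G)·H = ∫ C^{1,1}(H,G)·F`. -/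
theorem duality_C21_C11 (F G H : SchwartzMap ℝ ℂ) :
    (∫ x : ℝ,
        (∫ ξ in {p : ℝ × ℝ | -p.1 / 2 < p.2},
          FourierTransform.fourier (⇑F : ℝ → ℂ) ξ.1 * FourierTransform.fourier (⇑G : ℝ → ℂ) ξ.2 *
            Complex.exp ((2 : ℂ) * (Real.pi : ℂ) * Complex.I * (x : ℂ) *
              ((ξ.1 : ℂ) + (ξ.2 : ℂ)))) * H x) =
      ∫ x : ℝ,
        (∫ ξ in {p : ℝ × ℝ | p.1 < p.2},
          FourierTransform.fourier (⇑H : ℝ → ℂ) ξ.1 * FourierTransform.fourier (⇑G : ℝ → ℂ) ξ.2 *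
            Complex.exp ((2 : ℂ) * (Real.pi : ℂ) * Complex.I * (x : ℂ) *
              ((ξ.1 : ℂ) + (ξ.2 : ℂ)))) * F x := by
  have hφ (A B : SchwartzMap ℝ ℂ) (S : Set (ℝ × ℝ)) :
      IntegrableOn (fun ξ : ℝ × ℝ => 𝓕 ⇑A ξ.1 * 𝓕 ⇑B ξ.2) S := by
    rw [IntegrableOn, Measure.volume_eq_prod]
    exact ((𝓕 A).integrable.mul_prod (𝓕 B).integrable).restrict
  simp_rw [← Complex.ofReal_add]
  rw [integral_integral_exp_mul_eq_integral_fourier (hφ F G _) (by fun_prop) H.integrable,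
    integral_integral_exp_mul_eq_integral_fourier (hφ H G _) (by fun_prop) F.integrable,
    setIntegral_neg_fst_div_two_lt_snd]
  congr 1 with ξ
  rw [show -(-(ξ.1 + ξ.2) + ξ.2) = ξ.1 by ring]
  ring
end
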